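/- arXiv:1508.04260 — 11 statements merged into one kernel-verified Lean document; each statement's English description precedes it below -/
import Mathlib

section
/- Let S be a commutative ring with identity, R a unitary subring of S, and V an intermediate ring with R ⊆ V ⊆ S. Then (R + (V :_S S) :_S S) = (V :_S S). In particular, an ideal I of S is an R-conductor ideal of S if and only if (R + I :_S S) = I. -/
/-- The conductor `(A :_S S) = {x ∈ S | x * S ⊆ A}` of an additive subgroup `A` of `S`,
as an ideal of `S`. -/
def condIdeal {S : Type*} [CommRing S] (A : AddSubgroup S) : Ideal S where
  carrier := {x : S | ∀ s : S, x * s ∈ A}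
  add_mem' := by
    intro x y hx hy s
    simpa [add_mul] using A.add_mem (hx s) (hy s)
  zero_mem' := by
    intro s
    simpa using A.zero_mem
  smul_mem' := by
    intro c x hx s
    have := hx (c * s)
    simpa [smul_eq_mul, mul_assoc, mul_comm, mul_left_comm] using this

/-- `R + I = {r + a | r ∈ R, a ∈ I}` as an additive subgroup of `S`. -/
def addSub {S : Type*} [CommRing S] (R : Subring S) (I : Ideal S) : AddSubgroup S where
  carrier := {x : S | ∃ r ∈ R, ∃ a ∈ I, x = r + a}
  zero_mem' := ⟨0, R.zero_mem, 0, I.zero_mem, by simp⟩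
  add_mem' := by
    rintro x y ⟨r, hr, a, ha, rfl⟩ ⟨r', hr', a', ha', rfl⟩
    exact ⟨r + r', R.add_mem hr hr', a + a', I.add_mem ha ha', by ring⟩
  neg_mem' := by
    rintro x ⟨r, hr, a, ha, rfl⟩
    exact ⟨-r, R.neg_mem hr, -a, I.neg_mem ha, by ring⟩

/-- `I` is an `R`-conductor ideal of `S` if `I = (V :_S S)` for some intermediate ring
`R ⊆ V ⊆ S`. -/
def IsConductorIdeal {S : Type*} [CommRing S] (R : Subring S) (I : Ideal S) : Prop :=
  ∃ V : Subring S, R ≤ V ∧ I = condIdeal V.toAddSubgroup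

def addSubring {S : Type*} [CommRing S] (R : Subring S) (I : Ideal S) : Subring S where
  carrier := {x : S | ∃ r ∈ R, ∃ a ∈ I, x = r + a}
  zero_mem' := ⟨0, R.zero_mem, 0, I.zero_mem, by simp⟩
  one_mem' := ⟨1, R.one_mem, 0, I.zero_mem, by simp⟩
  add_mem' := by
    rintro x y ⟨r, hr, a, ha, rfl⟩ ⟨r', hr', a', ha', rfl⟩
    exact ⟨r + r', R.add_mem hr hr', a + a', I.add_mem ha ha', by ring⟩
  neg_mem' := by
    rintro x ⟨r, hr, a, ha, rfl⟩
    exact ⟨-r, R.neg_mem hr, -a, I.neg_mem ha, by ring⟩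
  mul_mem' := by
    rintro x y ⟨r, hr, a, ha, rfl⟩ ⟨r', hr', a', ha', rfl⟩
    refine ⟨r * r', R.mul_mem hr hr', r * a' + a * r' + a * a', ?_, by ring⟩
    exact I.add_mem (I.add_mem (I.mul_mem_left _ ha') (I.mul_mem_right _ ha))
      (I.mul_mem_right _ ha)

lemma addSubring_toAddSubgroup {S : Type*} [CommRing S] (R : Subring S) (I : Ideal S) :
    (addSubring R I).toAddSubgroup = addSub R I := by
  ext x; rfl

lemma key {S : Type*} [CommRing S] (R : Subring S) (V : Subring S) (hRV : R ≤ V) :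
    condIdeal (addSub R (condIdeal V.toAddSubgroup)) = condIdeal V.toAddSubgroup := by
  ext x
  constructor
  · intro hx s
    obtain ⟨r, hr, a, ha, he⟩ := hx s
    have : a ∈ V := by simpa using ha 1
    rw [he]
    exact V.add_mem (hRV hr) this
  · intro hx s
    refine ⟨0, R.zero_mem, x * s, fun t => ?_, by simp⟩
    simpa [mul_assoc] using hx (s * t)

/-- For any intermediate ring `R ⊆ V ⊆ S` we have `(R + (V :_S S) :_S S) = (V :_S S)`.
In particular, an ideal `I` of `S` is an `R`-conductor ideal of `S` if and only if
`(R + I :_S S) = I`. -/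
theorem stmt_0 {S : Type*} [CommRing S] (R : Subring S) :
    (∀ V : Subring S, R ≤ V →
      condIdeal (addSub R (condIdeal V.toAddSubgroup)) = condIdeal V.toAddSubgroup) ∧
    (∀ I : Ideal S, IsConductorIdeal R I ↔ condIdeal (addSub R I) = I) := by
  refine ⟨key R, fun I => ⟨?_, fun h => ?_⟩⟩
  · rintro ⟨V, hRV, rfl⟩
    exact key R V hRV
  · refine ⟨addSubring R I, fun r hr => ⟨r, hr, 0, I.zero_mem, by simp⟩, ?_⟩
    rw [addSubring_toAddSubgroup, h]
end

section
/- Let S be a commutative ring with identity, R a unitary subring of S, and I and J ideals of S. If I is an R-conductor ideal of S, then R + J ⊊ S or (I :_R J) ⊆ I. -/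
/-- If `I` is an `R`-conductor ideal of `S`, then `R + J ⊊ S` or `(I :_R J) ⊆ I`. -/
theorem stmt_2 {S : Type*} [CommRing S] (R : Subring S) (I J : Ideal S)
    (hI : IsConductorIdeal R I) :
    addSub R J ≠ ⊤ ∨ {x : S | x ∈ R ∧ ∀ j ∈ J, x * j ∈ I} ⊆ (I : Set S) := by
  obtain ⟨V, hRV, rfl⟩ := hI
  by_cases htop : addSub R J = ⊤
  · right
    rintro x ⟨hxR, hxJ⟩
    intro s
    have hs : s ∈ addSub R J := htop ▸ AddSubgroup.mem_top s
    obtain ⟨r, hr, j, hj, rfl⟩ := hs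
    have h1 : x * r ∈ V := V.mul_mem (hRV hxR) (hRV hr)
    have h2 : x * j ∈ V := by simpa using hxJ j hj 1
    simpa [mul_add] using V.toAddSubgroup.add_mem h1 h2
  · exact Or.inl htop
end

section
/- Let S be a commutative ring with identity, R a unitary subring of S, T a non-empty index set, and (I_i)_{i∈T} a family of R-conductor ideals of S. Then the intersection ⋂_{i∈T} I_i is an R-conductor ideal of S. In particular, if n is a positive integer and (J_i)_{i=1}^n is a finite sequence of pairwise coprime R-conductor ideals of S (i.e., J_i + J_j = S for i ≠ j), then the product ∏_{i=1}^n J_i is an R-conductor ideal of S. -/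
lemma prod_eq_iInf_of_pairwise_coprime {S : Type*} [CommRing S] {ι : Type*}
    (s : Finset ι) (J : ι → Ideal S) (h : ∀ i ∈ s, ∀ j ∈ s, i ≠ j → J i ⊔ J j = ⊤) :
    ∏ i ∈ s, J i = ⨅ i ∈ s, J i := by
  classical
  induction s using Finset.induction_on with
  | empty => simp
  | @insert a s ha ih =>
    rw [Finset.prod_insert ha]
    have hcop : J a ⊔ ∏ i ∈ s, J i = ⊤ :=
      Ideal.sup_prod_eq_top fun i hi =>
        h a (Finset.mem_insert_self a s) i (Finset.mem_insert_of_mem hi)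
          (fun e => ha (e ▸ hi))
    rw [Ideal.mul_eq_inf_of_coprime hcop,
      ih (fun i hi j hj => h i (Finset.mem_insert_of_mem hi) j (Finset.mem_insert_of_mem hj))]
    simp [Finset.mem_insert, iInf_or, iInf_inf_eq, inf_comm]


lemma stmt_4_aux {S : Type*} [CommRing S] (R : Subring S)
    (T : Type*) (_ : Nonempty T) (I : T → Ideal S)
    (hI : ∀ i, IsConductorIdeal R (I i)) : IsConductorIdeal R (⨅ i, I i) := by
  choose V hV hVI using hI
  refine ⟨⨅ i, V i, le_iInf hV, ?_⟩
  ext x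
  simp only [Ideal.mem_iInf, hVI]
  constructor
  · intro h s
    exact Subring.mem_iInf.mpr fun i => h i s
  · intro h i s
    exact Subring.mem_iInf.mp (h s) i

/-- An arbitrary nonempty intersection of `R`-conductor ideals of `S` is an `R`-conductor
ideal of `S`. In particular, a finite product of pairwise coprime `R`-conductor ideals of
`S` is an `R`-conductor ideal of `S`. -/
theorem stmt_4 {S : Type*} [CommRing S] (R : Subring S) :
    (∀ (T : Type*) (_ : Nonempty T) (I : T → Ideal S),
      (∀ i, IsConductorIdeal R (I i)) → IsConductorIdeal R (⨅ i, I i)) ∧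
    (∀ (n : ℕ), 0 < n → ∀ (J : Fin n → Ideal S),
      (∀ i j, i ≠ j → J i + J j = ⊤) → (∀ i, IsConductorIdeal R (J i)) →
      IsConductorIdeal R (∏ i, J i)) := by
  refine ⟨fun T h I hI => stmt_4_aux R T h I hI, ?_⟩
  intro n hn J hcop hJ
  have hne : Nonempty (Fin n) := ⟨⟨0, hn⟩⟩
  have hprod : ∏ i, J i = ⨅ i, J i := by
    rw [prod_eq_iInf_of_pairwise_coprime Finset.univ J
      (fun i _ j _ hij => hcop i j hij)]
    simp
  rw [hprod]
  exact stmt_4_aux R (Fin n) hne J hJ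
end

section
/- Let S be a commutative ring with identity, R a unitary subring of S, and I and J ideals of S such that (I ∩ R) + (J ∩ R) = R. Then (R + I) ∩ (R + J) = R + IJ, and (R + I :_S S)·(R + J :_S S) ⊆ (R + IJ :_S S). -/
section

variable {S : Type*} [CommRing S]

theorem condIdeal_mul_le_inf (A B : AddSubgroup S) :
    condIdeal A * condIdeal B ≤ condIdeal (A ⊓ B) := by
  refine Ideal.mul_le.2 fun x hx y hy s => AddSubgroup.mem_inf.2 ⟨?_, ?_⟩
  · simpa only [mul_assoc] using hx (y * s)
  · simpa only [mul_left_comm x y, mul_assoc] using hy (x * s)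

theorem addSub_mono (R : Subring S) {I I' : Ideal S} (h : I ≤ I') : addSub R I ≤ addSub R I' :=
  fun _ ⟨r, hr, a, ha, hx⟩ => ⟨r, hr, a, h ha, hx⟩

theorem addSub_mul_le_inf (R : Subring S) (I J : Ideal S) :
    addSub R (I * J) ≤ addSub R I ⊓ addSub R J :=
  le_inf (addSub_mono R Ideal.mul_le_left) (addSub_mono R Ideal.mul_le_right)

/-- Writing `x = r + a = r' + b` with `a ∈ I`, `b ∈ J`, the decomposition
`x = x e + x f = (r' e + r f) + (b e + a f)` puts `x` in `R + IJ`. -/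
theorem addSub_inf_eq_addSub_mul (R : Subring S) {I J : Ideal S} {e f : S}
    (heR : e ∈ R) (hfR : f ∈ R) (heI : e ∈ I) (hfJ : f ∈ J) (hef : e + f = 1) :
    addSub R I ⊓ addSub R J = addSub R (I * J) := by
  refine le_antisymm ?_ (addSub_mul_le_inf R I J)
  rintro x ⟨⟨r, hr, a, ha, hxa⟩, ⟨r', hr', b, hb, hxb⟩⟩
  refine ⟨r' * e + r * f, add_mem (mul_mem hr' heR) (mul_mem hr hfR), b * e + a * f,
    add_mem (mul_comm e b ▸ Ideal.mul_mem_mul heI hb) (Ideal.mul_mem_mul ha hfJ), ?_⟩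
  calc x = x * e + x * f := by rw [← mul_add, hef, mul_one]
    _ = (r' + b) * e + (r + a) * f := by rw [← hxa, ← hxb]
    _ = r' * e + r * f + (b * e + a * f) := by ring

end

/-- If `(I ∩ R) + (J ∩ R) = R`, then `(R + I) ∩ (R + J) = R + IJ` and
`(R + I :_S S) · (R + J :_S S) ⊆ (R + IJ :_S S)`. -/
theorem stmt_5 {S : Type*} [CommRing S] (R : Subring S) (I J : Ideal S)
    (hco : {x : S | ∃ a ∈ R, ∃ b ∈ R, a ∈ I ∧ b ∈ J ∧ x = a + b} = (R : Set S)) :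
    (addSub R I : Set S) ∩ (addSub R J : Set S) = (addSub R (I * J) : Set S) ∧
    condIdeal (addSub R I) * condIdeal (addSub R J) ≤ condIdeal (addSub R (I * J)) := by
  obtain ⟨e, heR, f, hfR, heI, hfJ, hef⟩ : (1 : S) ∈ {x : S | ∃ a ∈ R, ∃ b ∈ R,
      a ∈ I ∧ b ∈ J ∧ x = a + b} := hco ▸ R.one_mem
  have hinf := addSub_inf_eq_addSub_mul R heR hfR heI hfJ hef.symm
  exact ⟨by rw [← hinf, AddSubgroup.coe_inf], hinf ▸ condIdeal_mul_le_inf _ _⟩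
end

section
/- Let S be a commutative ring with identity, R a unitary subring of S, and I and J ideals of S such that (I ∩ R) + (J ∩ R) = R. If (R + IJ :_S S) = IJ, then I·(R + J :_S S) = IJ. In particular, if IJ is an R-conductor ideal of S and I is a cancellative ideal of S, then J is an R-conductor ideal of S. -/
lemma mem_condIdeal {S : Type*} [CommRing S] (A : AddSubgroup S) (x : S) :
    x ∈ condIdeal A ↔ ∀ s : S, x * s ∈ A := Iff.rfl

lemma mem_addSub {S : Type*} [CommRing S] (R : Subring S) (I : Ideal S) (x : S) :
    x ∈ addSub R I ↔ ∃ r ∈ R, ∃ a ∈ I, x = r + a := Iff.rfl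

/-- `R + J` is a subring of `S` when `J` is an ideal of `S`. -/
def ringAdd {S : Type*} [CommRing S] (R : Subring S) (J : Ideal S) : Subring S where
  carrier := {x : S | ∃ r ∈ R, ∃ a ∈ J, x = r + a}
  zero_mem' := ⟨0, R.zero_mem, 0, J.zero_mem, by simp⟩
  one_mem' := ⟨1, R.one_mem, 0, J.zero_mem, by simp⟩
  add_mem' := by
    rintro x y ⟨r, hr, a, ha, rfl⟩ ⟨r', hr', a', ha', rfl⟩
    exact ⟨r + r', R.add_mem hr hr', a + a', J.add_mem ha ha', by ring⟩
  neg_mem' := by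
    rintro x ⟨r, hr, a, ha, rfl⟩
    exact ⟨-r, R.neg_mem hr, -a, J.neg_mem ha, by ring⟩
  mul_mem' := by
    rintro x y ⟨r, hr, a, ha, rfl⟩ ⟨r', hr', a', ha', rfl⟩
    refine ⟨r * r', R.mul_mem hr hr', r * a' + a * r' + a * a', ?_, by ring⟩
    exact J.add_mem (J.add_mem (J.mul_mem_left r ha') (J.mul_mem_right r' ha))
      (J.mul_mem_left a ha')

lemma ringAdd_toAddSubgroup {S : Type*} [CommRing S] (R : Subring S) (J : Ideal S) :
    (ringAdd R J).toAddSubgroup = addSub R J := rfl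

/-- Suppose `(I ∩ R) + (J ∩ R) = R`. If `(R + IJ :_S S) = IJ`, then
`I · (R + J :_S S) = IJ`. In particular, if `IJ` is an `R`-conductor ideal of `S` and
`I` is cancellative, then `J` is an `R`-conductor ideal of `S`. -/
theorem stmt_6 {S : Type*} [CommRing S] (R : Subring S) (I J : Ideal S)
    (hco : {x : S | ∃ a ∈ R, ∃ b ∈ R, a ∈ I ∧ b ∈ J ∧ x = a + b} = (R : Set S)) :
    (condIdeal (addSub R (I * J)) = I * J → I * condIdeal (addSub R J) = I * J) ∧
    ((∀ A B : Ideal S, I * A = I * B → A = B) → IsConductorIdeal R (I * J) →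
      IsConductorIdeal R J) := by
  -- extract the comaximality witness: 1 = a + b with a ∈ I ∩ R, b ∈ J ∩ R
  have h1 : (1 : S) ∈ {x : S | ∃ a ∈ R, ∃ b ∈ R, a ∈ I ∧ b ∈ J ∧ x = a + b} := by
    rw [hco]; exact R.one_mem
  obtain ⟨a, haR, b, hbR, haI, hbJ, hab⟩ := h1
  -- J ⊆ (R + J : S)
  have hJD : J ≤ condIdeal (addSub R J) := by
    intro j hj s
    exact ⟨0, R.zero_mem, j * s, J.mul_mem_right s hj, by ring⟩
  have main : condIdeal (addSub R (I * J)) = I * J → I * condIdeal (addSub R J) = I * J := by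
    intro hyp
    apply le_antisymm
    · rw [Ideal.mul_le]
      intro i hi d hd
      -- key: a * d' ∈ I*J for any d' ∈ (R + J : S)
      have key : ∀ d' ∈ condIdeal (addSub R J), a * d' ∈ I * J := by
        intro d' hd'
        rw [← hyp, mem_condIdeal]
        intro s
        obtain ⟨r, hr, j, hj, heq⟩ := hd' s
        refine ⟨a * r, R.mul_mem haR hr, a * j, Ideal.mul_mem_mul haI hj, ?_⟩
        calc a * d' * s = a * (d' * s) := by ring
        _ = a * r + a * j := by rw [heq]; ring
      have hsplit : i * d = a * (i * d) + i * (b * d) := by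
        calc i * d = (a + b) * (i * d) := by rw [← hab]; ring
        _ = a * (i * d) + i * (b * d) := by ring
      rw [hsplit]
      have hid : i * d ∈ condIdeal (addSub R J) :=
        (condIdeal (addSub R J)).mul_mem_left i hd
      exact add_mem (key _ hid) (Ideal.mul_mem_mul hi (J.mul_mem_right d hbJ))
    · rw [Ideal.mul_le]
      intro i hi j hj
      exact Ideal.mul_mem_mul hi (hJD hj)
  refine ⟨main, ?_⟩
  rintro hcancel ⟨V, hRV, hVeq⟩
  -- I*J ⊆ V
  have hIJV : ∀ x ∈ I * J, x ∈ V := by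
    intro x hx
    rw [hVeq] at hx
    simpa using hx 1
  -- (R + IJ : S) = IJ
  have hyp : condIdeal (addSub R (I * J)) = I * J := by
    apply le_antisymm
    · intro x hx
      rw [hVeq, mem_condIdeal]
      intro s
      obtain ⟨r, hr, p, hp, heq⟩ := hx s
      rw [heq]
      exact V.add_mem (hRV hr) (hIJV p hp)
    · intro x hx s
      exact ⟨0, R.zero_mem, x * s, Ideal.mul_mem_right s _ hx, by ring⟩
  have hDJ : condIdeal (addSub R J) = J := hcancel _ _ (main hyp)
  exact ⟨ringAdd R J, fun r hr => ⟨r, hr, 0, J.zero_mem, by ring⟩,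
    by rw [ringAdd_toAddSubgroup, hDJ]⟩
end

section
/- Let S be a commutative ring with identity and R a unitary subring of S such that S is a cyclic R-module. Then S = R. -/
/-- If `R` is a unitary subring of `S` such that `S` is a cyclic `R`-module
(i.e. `S = xR` for some `x ∈ S`), then `S = R`. -/
theorem stmt_8 {S : Type*} [CommRing S] (R : Subring S)
    (hcyc : ∃ x : S, ∀ s : S, ∃ r ∈ R, s = x * r) :
    R = ⊤ := by
  obtain ⟨x, hx⟩ := hcyc
  obtain ⟨r, hr, h1⟩ := hx 1
  obtain ⟨r₂, hr₂, h2⟩ := hx (x * x)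
  -- x = x * (r₂ * r)
  have hxr : x = x * (r₂ * r) := by
    calc x = x * 1 := by ring
    _ = x * (x * r) := by rw [← h1]
    _ = (x * x) * r := by ring
    _ = (x * r₂) * r := by rw [h2]
    _ = x * (r₂ * r) := by ring
  have hr2r : (1 : S) = r₂ * r := by
    calc (1 : S) = x * r := h1
    _ = (x * (r₂ * r)) * r := by rw [← hxr]
    _ = (x * r) * (r₂ * r) := by ring
    _ = 1 * (r₂ * r) := by rw [← h1]
    _ = r₂ * r := by ring
  have hxR : x ∈ R := by
    have : x = r₂ := by
      calc x = x * (r * r₂) := by rw [mul_comm r r₂, ← hxr]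
      _ = (x * r) * r₂ := by ring
      _ = 1 * r₂ := by rw [← h1]
      _ = r₂ := by ring
    rw [this]; exact hr₂
  ext s
  simp only [Subring.mem_top, iff_true]
  obtain ⟨rs, hrs, hs⟩ := hx s
  rw [hs]
  exact R.mul_mem hxR hrs
end

section
/- Let S be a commutative ring with identity, R a unitary subring of S, and M a maximal ideal of S. The following are equivalent: (a) M is an R-conductor ideal of S; (b) R + M ⊊ S; (c) S/M is not a cyclic R-module; (d) if M ∩ R is a maximal ideal of R, then the dimension of S/M as a vector space over the field R/(M ∩ R) is at least 2. -/
/-- For a maximal ideal `M` of `S`, the following are equivalent: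
(a) `M` is an `R`-conductor ideal of `S`; (b) `R + M ⊊ S`; (c) `S/M` is not a cyclic
`R`-module; (d) if `M ∩ R ∈ max(R)`, then `dim_{R/(M ∩ R)}(S/M) ≥ 2`. -/
theorem stmt_10 {S : Type*} [CommRing S] (R : Subring S) (M : Ideal S) (hM : M.IsMaximal) :
    (IsConductorIdeal R M ↔ addSub R M ≠ ⊤) ∧
    (addSub R M ≠ ⊤ ↔ ¬ ∃ x : S, ∀ s : S, ∃ r ∈ R, s - r * x ∈ M) ∧
    ((¬ ∃ x : S, ∀ s : S, ∃ r ∈ R, s - r * x ∈ M) ↔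
      ((M.comap R.subtype).IsMaximal →
        2 ≤ @Module.rank (↥R ⧸ M.comap R.subtype) (S ⧸ M) _ _
          (Ideal.quotientMap M R.subtype le_rfl).toModule)) := by
  -- the intermediate ring R + M
  set V : Subring S :=
    { carrier := {x : S | ∃ r ∈ R, ∃ a ∈ M, x = r + a}
      zero_mem' := ⟨0, R.zero_mem, 0, M.zero_mem, by simp⟩
      one_mem' := ⟨1, R.one_mem, 0, M.zero_mem, by simp⟩
      add_mem' := by
        rintro x y ⟨r, hr, a, ha, rfl⟩ ⟨r', hr', a', ha', rfl⟩
        exact ⟨r + r', R.add_mem hr hr', a + a', M.add_mem ha ha', by ring⟩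
      neg_mem' := by
        rintro x ⟨r, hr, a, ha, rfl⟩
        exact ⟨-r, R.neg_mem hr, -a, M.neg_mem ha, by ring⟩
      mul_mem' := by
        rintro x y ⟨r, hr, a, ha, rfl⟩ ⟨r', hr', a', ha', rfl⟩
        refine ⟨r * r', R.mul_mem hr hr', r * a' + a * r' + a * a',
          M.add_mem (M.add_mem (M.mul_mem_left _ ha') (M.mul_mem_right _ ha))
            (M.mul_mem_right _ ha), by ring⟩ } with hV
  have hmemV : ∀ x : S, x ∈ V ↔ x ∈ addSub R M := fun x => Iff.rfl
  -- (b) ↔ (c), as equalities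
  have keybc : addSub R M = ⊤ ↔ ∃ x : S, ∀ s : S, ∃ r ∈ R, s - r * x ∈ M := by
    constructor
    · intro htop
      refine ⟨1, fun s => ?_⟩
      obtain ⟨r, hr, a, ha, hsr⟩ := htop ▸ AddSubgroup.mem_top s
      refine ⟨r, hr, ?_⟩
      rw [mul_one, hsr]
      simpa using ha
    · rintro ⟨x, hx⟩
      have hxM : x ∉ M := by
        intro hxm
        obtain ⟨r, hr, h1⟩ := hx 1
        have : (1 : S) ∈ M := by
          have := M.add_mem h1 (M.mul_mem_left r hxm)
          simpa using this
        exact hM.ne_top ((Ideal.eq_top_iff_one M).mpr this)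
      obtain ⟨r₁, hr₁, hxr₁⟩ := hx (x * x)
      have hprime : (x - r₁) * x ∈ M := by
        have h : x * x - r₁ * x = (x - r₁) * x := by ring
        rwa [h] at hxr₁
      have hx1 : x - r₁ ∈ M := (hM.isPrime.mem_or_mem hprime).resolve_right hxM
      rw [eq_top_iff]
      rintro s -
      obtain ⟨r, hr, hs⟩ := hx s
      refine ⟨r * r₁, R.mul_mem hr hr₁, s - r * r₁, ?_, by ring⟩
      have h : s - r * x + r * (x - r₁) = s - r * r₁ := by ring
      exact h ▸ M.add_mem hs (M.mul_mem_left r hx1)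
  refine ⟨?_, not_iff_not.mpr keybc, ?_⟩
  · -- (a) ↔ (b)
    constructor
    · rintro ⟨W, hRW, hMW⟩ htop
      have hW : ∀ s : S, s ∈ W := by
        intro s
        obtain ⟨r, hr, a, ha, rfl⟩ := htop ▸ AddSubgroup.mem_top s
        have ha' : a ∈ W := by
          have h : a ∈ condIdeal W.toAddSubgroup := hMW ▸ ha
          simpa using h 1
        exact W.add_mem (hRW hr) ha'
      have : (1 : S) ∈ M := by
        rw [hMW]
        intro s
        exact hW _
      exact hM.ne_top ((Ideal.eq_top_iff_one M).mpr this)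
    · intro hne
      refine ⟨V, fun r hr => ⟨r, hr, 0, M.zero_mem, by simp⟩, ?_⟩
      have hle : M ≤ condIdeal V.toAddSubgroup := by
        intro x hx s
        exact ⟨0, R.zero_mem, x * s, M.mul_mem_right _ hx, by simp⟩
      have hnetop : condIdeal V.toAddSubgroup ≠ ⊤ := by
        intro h
        apply hne
        ext s
        simp only [AddSubgroup.mem_top, iff_true]
        have h1 : (1 : S) ∈ condIdeal V.toAddSubgroup := h ▸ Submodule.mem_top
        have hs := h1 s
        rw [one_mul] at hs
        exact (hmemV s).mp hs
      exact hM.eq_of_le hnetop hle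
  · -- (c) ↔ (d)
    set p := M.comap R.subtype with hp
    letI : Module (↥R ⧸ p) (S ⧸ M) := (Ideal.quotientMap M R.subtype le_rfl).toModule
    have hsmul : ∀ (c : ↥R ⧸ p) (v : S ⧸ M),
        c • v = Ideal.quotientMap M R.subtype le_rfl c * v := fun _ _ => rfl
    -- generator characterization of rank ≤ 1 (in presence of a field structure on R/p)
    have hgen : ∀ _ : p.IsMaximal,
        ((∃ x : S, ∀ s : S, ∃ r ∈ R, s - r * x ∈ M) ↔ Module.rank (↥R ⧸ p) (S ⧸ M) ≤ 1) := by
      intro hpmax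
      haveI := hpmax
      letI : Field (↥R ⧸ p) := Ideal.Quotient.field p
      haveI : Module.Free (↥R ⧸ p) (S ⧸ M) := Module.Free.of_divisionRing _ _
      rw [rank_le_one_iff]
      constructor
      · rintro ⟨x, hx⟩
        refine ⟨Ideal.Quotient.mk M x, fun v => ?_⟩
        obtain ⟨s, rfl⟩ := Ideal.Quotient.mk_surjective v
        obtain ⟨r, hr, hs⟩ := hx s
        refine ⟨Ideal.Quotient.mk p ⟨r, hr⟩, ?_⟩
        rw [hsmul, Ideal.quotientMap_mk, ← map_mul]
        exact (Ideal.Quotient.mk_eq_mk_iff_sub_mem _ _).mpr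
          (by simpa using M.neg_mem hs)
      · rintro ⟨v₀, hv₀⟩
        obtain ⟨x, rfl⟩ := Ideal.Quotient.mk_surjective v₀
        refine ⟨x, fun s => ?_⟩
        obtain ⟨c, hc⟩ := hv₀ (Ideal.Quotient.mk M s)
        obtain ⟨⟨r, hr⟩, rfl⟩ := Ideal.Quotient.mk_surjective c
        refine ⟨r, hr, ?_⟩
        rw [hsmul, Ideal.quotientMap_mk, ← map_mul] at hc
        have h2 := M.neg_mem ((Ideal.Quotient.mk_eq_mk_iff_sub_mem _ _).mp hc)
        simpa using h2
    constructor
    · intro hnc hpmax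
      by_contra hlt
      rw [Cardinal.two_le_iff_one_lt, not_lt] at hlt
      exact hnc ((hgen hpmax).mpr hlt)
    · intro hrank hcyc
      -- cyclic implies R + M = S, hence p is maximal
      have htop : addSub R M = ⊤ := keybc.mpr hcyc
      have hsurj : Function.Surjective ((Ideal.Quotient.mk M).comp R.subtype) := by
        intro v
        obtain ⟨s, rfl⟩ := Ideal.Quotient.mk_surjective v
        obtain ⟨r, hr, a, ha, rfl⟩ := htop ▸ AddSubgroup.mem_top s
        refine ⟨⟨r, hr⟩, ?_⟩
        have hmk : Ideal.Quotient.mk M r = Ideal.Quotient.mk M (r + a) := by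
          rw [map_add, Ideal.Quotient.eq_zero_iff_mem.mpr ha, add_zero]
        rw [RingHom.comp_apply]
        exact hmk
      have hker : RingHom.ker ((Ideal.Quotient.mk M).comp R.subtype) = p := by
        ext x
        simp [RingHom.mem_ker, Ideal.Quotient.eq_zero_iff_mem, hp, Ideal.mem_comap]
      haveI := hM
      letI : Field (S ⧸ M) := Ideal.Quotient.field M
      have hpmax : p.IsMaximal := by
        have h' := RingHom.ker_isMaximal_of_surjective _ hsurj
        rw [← hker]
        exact h'
      have h1 : Module.rank (↥R ⧸ p) (S ⧸ M) ≤ 1 := (hgen hpmax).mp hcyc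
      have h2 := hrank hpmax
      exact absurd (h2.trans h1) (by norm_num)
end

section
/- Let S be a commutative ring with identity, R a unitary subring of S, and I an ideal of S such that S/(R :_S S) is a Noetherian ring and R/(R :_S S) is a principal ideal ring. Then I is an R-conductor ideal of S if and only if (R :_S S) ⊆ I and for every prime ideal M of S containing I, either R + M ⊊ S or (I :_R M) ⊆ I. -/
/-!
For the converse take `V = R + I`; the point is `(V :_S S) ⊆ I`. Otherwise, since
`S/(R :_S S)` is Noetherian and every `(I :_S x)` contains `(R :_S S)`, some `x ∈ (V :_S S) \ I`
has `M = (I :_S x)` maximal among such colon ideals, which makes `M` a prime containing `I`.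
Multiplication by `x` embeds `S/M` into `(R + I)/I ≅ R/(R ∩ I)` as an `R`-submodule, i.e. as an
ideal of a quotient of the principal ideal ring `R/(R :_S S)`; hence `S = Rg + M` for some `g`.
As `S/M` is a domain, `g² ≡ cg` with `c ∈ R` forces `g ≡ c`, so `R + M = S`. Then
`(I :_R M) ⊆ I`, and writing `x = r + a` with `r ∈ R`, `a ∈ I` gives `r ∈ (I :_R M)`, so `x ∈ I`.
-/

open Ideal

section Conductor

variable {S : Type*} [CommRing S]

theorem condIdeal_mono {A B : AddSubgroup S} (h : A ≤ B) : condIdeal A ≤ condIdeal B :=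
  fun _ hx s => h (hx s)

theorem mem_of_mem_condIdeal {A : AddSubgroup S} {x : S} (hx : x ∈ condIdeal A) : x ∈ A := by
  simpa using hx 1

theorem le_condIdeal_addSub (R : Subring S) (I : Ideal S) : I ≤ condIdeal (addSub R I) :=
  fun x hx s => ⟨0, R.zero_mem, x * s, I.mul_mem_right s hx, (zero_add _).symm⟩

theorem exists_subring_toAddSubgroup_eq_addSub (R : Subring S) (I : Ideal S) :
    ∃ V : Subring S, R ≤ V ∧ V.toAddSubgroup = addSub R I := by
  refine ⟨(R.map (Ideal.Quotient.mk I)).comap (Ideal.Quotient.mk I), fun r hr => ⟨r, hr, rfl⟩, ?_⟩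
  ext x
  simp only [Subring.mem_toAddSubgroup, Subring.mem_comap, Subring.mem_map,
    Ideal.Quotient.mk_eq_mk_iff_sub_mem]
  constructor
  · rintro ⟨r, hr, hrx⟩
    exact ⟨r, hr, x - r, by simpa using I.neg_mem hrx, by ring⟩
  · rintro ⟨r, hr, a, ha, rfl⟩
    exact ⟨r, hr, by simpa using I.neg_mem ha⟩

theorem colon_subset_condIdeal_of_addSub_eq_top {R V : Subring S} (hRV : R ≤ V) {M : Ideal S}
    (hM : addSub R M = ⊤) :
    {x : S | x ∈ R ∧ ∀ m ∈ M, x * m ∈ condIdeal V.toAddSubgroup} ⊆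
      (condIdeal V.toAddSubgroup : Set S) := by
  rintro x ⟨hxR, hxM⟩ s
  obtain ⟨r, hr, m, hm, rfl⟩ : s ∈ addSub R M := hM ▸ AddSubgroup.mem_top s
  rw [mul_add]
  exact V.add_mem (V.mul_mem (hRV hxR) (hRV hr)) (mem_of_mem_condIdeal (hxM m hm))

theorem exists_maximal_of_isNoetherianRing_quotient {C : Ideal S} [IsNoetherianRing (S ⧸ C)]
    {F : Set (Ideal S)} (hF : F.Nonempty) (hCF : ∀ P ∈ F, C ≤ P) :
    ∃ P, Maximal (· ∈ F) P := by
  obtain ⟨_, ⟨P, hP, rfl⟩, hmax⟩ :=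
    set_has_maximal_iff_noetherian.mpr ‹_› (map (Ideal.Quotient.mk C) '' F) (hF.image _)
  refine ⟨P, hP, fun Q hQ hPQ => ?_⟩
  have hPQ' : Q.map (Ideal.Quotient.mk C) = P.map (Ideal.Quotient.mk C) :=
    ((Ideal.map_mono hPQ).lt_or_eq.resolve_left (hmax _ ⟨Q, hQ, rfl⟩)).symm
  rw [← comap_map_mk (hCF Q hQ), hPQ', comap_map_mk (hCF P hP)]

theorem exists_isPrime_colon_singleton {C I J : Ideal S} [IsNoetherianRing (S ⧸ C)]
    (hCI : C ≤ I) (hJI : ¬J ≤ I) : ∃ x ∈ J, x ∉ I ∧ (I.colon {x}).IsPrime := by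
  obtain ⟨x, hxJ, hxI⟩ := SetLike.not_le_iff_exists.mp hJI
  obtain ⟨_, ⟨x₀, hx₀J, hx₀I, rfl⟩, hmax⟩ :=
    exists_maximal_of_isNoetherianRing_quotient (F := {P | ∃ y ∈ J, y ∉ I ∧ I.colon {y} = P})
      ⟨_, x, hxJ, hxI, rfl⟩ (by rintro _ ⟨y, -, -, rfl⟩; exact hCI.trans le_colon)
  refine ⟨x₀, hx₀J, hx₀I, ⟨fun h => hx₀I ?_, fun {a b} hab => or_iff_not_imp_right.2 fun hb => ?_⟩⟩
  · simpa using (eq_top_iff_one _).mp h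
  · rw [Submodule.mem_colon_singleton, smul_eq_mul] at hab hb
    have hle : I.colon {x₀} ≤ I.colon {b * x₀} := fun r hr => by
      rw [Submodule.mem_colon_singleton, smul_eq_mul] at hr ⊢
      rw [mul_left_comm]
      exact I.mul_mem_left b hr
    have hmem : a ∈ I.colon {b * x₀} := by
      rwa [Submodule.mem_colon_singleton, smul_eq_mul, ← mul_assoc]
    exact hmax ⟨b * x₀, J.mul_mem_left b hx₀J, hb, rfl⟩ hle hmem

theorem addSub_eq_top_of_forall_sub_mul_mem {R : Subring S} {M : Ideal S} [hM : M.IsPrime]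
    {g : S} (hg : ∀ s, ∃ t ∈ R, s - t * g ∈ M) : addSub R M = ⊤ := by
  obtain ⟨c, hcR, hc⟩ := hg (g * g)
  have hgM : g ∉ M := fun hgM => by
    obtain ⟨t, -, ht⟩ := hg 1
    exact hM.ne_top ((eq_top_iff_one M).2 (by simpa using M.add_mem ht (M.mul_mem_left t hgM)))
  have hgc : g - c ∈ M :=
    (hM.mem_or_mem (show g * (g - c) ∈ M by convert hc using 1; ring)).resolve_left hgM
  refine (AddSubgroup.eq_top_iff' _).2 fun s => ?_
  obtain ⟨t, htR, ht⟩ := hg s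
  exact ⟨t * c, R.mul_mem htR hcR, s - t * g + t * (g - c), M.add_mem ht (M.mul_mem_left t hgc),
    by ring⟩

theorem exists_eq_span_singleton_sup {A : Type*} [CommRing A] {L K : Ideal A}
    [IsPrincipalIdealRing (A ⧸ L)] (hLK : L ≤ K) : ∃ a ∈ K, K = span {a} ⊔ L := by
  obtain ⟨z, hz⟩ := (IsPrincipalIdealRing.principal (K.map (Ideal.Quotient.mk L))).principal
  obtain ⟨a, rfl⟩ := Ideal.Quotient.mk_surjective z
  have hK : K = span {a} ⊔ L := by
    rw [← comap_map_mk hLK, hz, submodule_span_eq, ← Set.image_singleton, ← Ideal.map_span,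
      comap_map_quotientMk, sup_comm]
  exact ⟨a, hK ▸ mem_sup_left (mem_span_singleton_self a), hK⟩

theorem exists_forall_sub_mul_mem_colon {R : Subring S} {C I : Ideal S}
    [IsPrincipalIdealRing (R ⧸ C.comap R.subtype)] (hCI : C ≤ I) {x : S}
    (hx : x ∈ condIdeal (addSub R I)) : ∃ g, ∀ s, ∃ t ∈ R, s - t * g ∈ I.colon {x} := by
  obtain ⟨a, haK, hK⟩ := exists_eq_span_singleton_sup
    (comap_mono (f := R.subtype) (hCI.trans le_sup_left : C ≤ I ⊔ span {x}))
  obtain ⟨i, hi, _, hgx, hia⟩ := Submodule.mem_sup.mp (mem_comap.mp haK)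
  obtain ⟨g, rfl⟩ := mem_span_singleton'.mp hgx
  refine ⟨g, fun s => ?_⟩
  obtain ⟨r, hr, i', hi', hxs⟩ := hx s
  have hrK : (⟨r, hr⟩ : R) ∈ (I ⊔ span {x}).comap R.subtype :=
    Submodule.mem_sup.mpr ⟨-i', I.neg_mem hi', s * x, mem_span_singleton'.mpr ⟨s, rfl⟩,
      by simp only [Subring.coe_subtype]; linear_combination hxs⟩
  rw [hK] at hrK
  obtain ⟨_, hta, c, hc, hrtc⟩ := Submodule.mem_sup.mp hrK
  obtain ⟨t, rfl⟩ := mem_span_singleton'.mp hta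
  have hr' : r = t * a + c := by simpa using congrArg Subtype.val hrtc.symm
  refine ⟨t, t.2, ?_⟩
  rw [Submodule.mem_colon_singleton, smul_eq_mul]
  have hcI : (c : S) ∈ I := hCI hc
  convert I.add_mem (I.add_mem hcI hi') (I.mul_mem_left t hi) using 1
  simp only [Subring.coe_subtype] at hia
  linear_combination hxs + hr' - t * hia

theorem condIdeal_addSub_le {R : Subring S} {I : Ideal S}
    [IsNoetherianRing (S ⧸ condIdeal R.toAddSubgroup)]
    [IsPrincipalIdealRing (R ⧸ (condIdeal R.toAddSubgroup).comap R.subtype)]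
    (hC : condIdeal R.toAddSubgroup ≤ I)
    (hI : ∀ M : Ideal S, M.IsPrime → I ≤ M →
      addSub R M ≠ ⊤ ∨ {x : S | x ∈ R ∧ ∀ m ∈ M, x * m ∈ I} ⊆ (I : Set S)) :
    condIdeal (addSub R I) ≤ I := by
  by_contra hJI
  obtain ⟨x, hxJ, hxI, hM⟩ := exists_isPrime_colon_singleton hC hJI
  rcases hI _ hM le_colon with hRM | hRI
  · obtain ⟨g, hg⟩ := exists_forall_sub_mul_mem_colon hC hxJ
    exact hRM (addSub_eq_top_of_forall_sub_mul_mem hg)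
  · obtain ⟨r, hr, a, ha, rfl⟩ := mem_of_mem_condIdeal hxJ
    refine hxI (I.add_mem (hRI ⟨hr, fun m hm => ?_⟩) ha)
    rw [Submodule.mem_colon_singleton, smul_eq_mul] at hm
    convert I.sub_mem hm (I.mul_mem_left m ha) using 1
    ring

end Conductor

/-- If `S/(R :_S S)` is Noetherian and `R/(R :_S S)` is a principal ideal ring, then `I` is
an `R`-conductor ideal of `S` if and only if `(R :_S S) ⊆ I` and for every prime ideal
`M` of `S` containing `I` we have `R + M ⊊ S` or `(I :_R M) ⊆ I`. -/
theorem stmt_12 {S : Type*} [CommRing S] (R : Subring S) (I : Ideal S)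
    (hN : IsNoetherianRing (S ⧸ condIdeal R.toAddSubgroup))
    (hP : IsPrincipalIdealRing (↥R ⧸ (condIdeal R.toAddSubgroup).comap R.subtype)) :
    IsConductorIdeal R I ↔
      condIdeal R.toAddSubgroup ≤ I ∧
      ∀ M : Ideal S, M.IsPrime → I ≤ M →
        addSub R M ≠ ⊤ ∨ {x : S | x ∈ R ∧ ∀ m ∈ M, x * m ∈ I} ⊆ (I : Set S) := by
  constructor
  · rintro ⟨V, hRV, rfl⟩
    exact ⟨condIdeal_mono hRV, fun M _ _ => or_iff_not_imp_left.2 fun hM =>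
      colon_subset_condIdeal_of_addSub_eq_top hRV (not_not.1 hM)⟩
  · rintro ⟨hC, hI⟩
    obtain ⟨V, hRV, hV⟩ := exists_subring_toAddSubgroup_eq_addSub R I
    refine ⟨V, hRV, ?_⟩
    rw [hV]
    exact le_antisymm (le_condIdeal_addSub R I) (condIdeal_addSub_le hC hI)
end

section
/- Let S be a Dedekind domain, R a subring of S that is a Dedekind domain, I an ideal of S with I ∩ R ≠ {0}, and M a prime ideal of S containing I. Set e_M = v_M((M ∩ R)S). Then for every nonnegative integer l, v_{M∩R}(M^l ∩ R) = ⌈l / e_M⌉. -/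
/-! Write `p = M ∩ R` and `e = e(M | p)`. For a nonzero `x ∈ R`, the exponent of `M` in `xS` is
`e` times the exponent of `p` in `xR`, so `x ∈ M ^ l` exactly when `v_p(x) ≥ l / e`. Hence
`M ^ l ∩ R = p ^ ⌈l / e⌉`, and `v_p(p ^ k) = k` because powers of `p` are strictly decreasing. -/

/-- The `P`-adic exponent `v_P(A)` of an ideal `A`: the largest `l ∈ ℕ` such that
`A ⊆ P ^ l`. -/
noncomputable def padicExp {D : Type*} [CommRing D] (P A : Ideal D) : ℕ :=
  sSup {l : ℕ | A ≤ P ^ l}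

theorem padicExp_eq_of_le_of_not_le {D : Type*} [CommRing D] {P A : Ideal D} {n : ℕ}
    (hle : A ≤ P ^ n) (hnle : ¬A ≤ P ^ (n + 1)) : padicExp P A = n := by
  have : {l : ℕ | A ≤ P ^ l} = Set.Iic n := by
    ext l
    exact ⟨fun hl => Set.mem_Iic.mpr <| not_lt.mp fun hnl =>
        hnle (hl.trans (Ideal.pow_le_pow_right hnl)),
      fun hl => hle.trans (Ideal.pow_le_pow_right hl)⟩
  rw [padicExp, this, csSup_Iic]

theorem padicExp_pow_self {D : Type*} [CommRing D] [IsDedekindDomain D] {P : Ideal D}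
    (hP0 : P ≠ ⊥) (hP1 : P ≠ ⊤) (k : ℕ) : padicExp P (P ^ k) = k :=
  padicExp_eq_of_le_of_not_le le_rfl (P.pow_right_strictAnti hP0 hP1 k.lt_succ_self).not_ge

namespace Ideal

theorem mem_pow_iff_le_emultiplicity {D : Type*} [CommRing D] [IsDedekindDomain D]
    {P : Ideal D} {n : ℕ} {x : D} :
    x ∈ P ^ n ↔ (n : ℕ∞) ≤ emultiplicity P (span {x}) := by
  rw [← span_singleton_le_iff_mem, ← dvd_iff_le, pow_dvd_iff_le_emultiplicity]

theorem comap_pow_eq_under_pow_ceil {R S : Type*} [CommRing R] [CommRing S]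
    [IsDedekindDomain R] [IsDedekindDomain S] [Algebra R S] [FaithfulSMul R S]
    (M : Ideal S) [M.IsPrime] (hM : M.under R ≠ ⊥) (l : ℕ) :
    (M ^ l).comap (algebraMap R S) =
      M.under R ^ ⌈(l : ℚ) / (M.under R).ramificationIdx' M⌉₊ := by
  set p := M.under R
  have hpM : p.map (algebraMap R S) ≤ M := map_comap_le
  have hM0 : M ≠ ⊥ := fun h => map_ne_bot_of_ne_bot hM (le_bot_iff.mp (h ▸ hpM))
  have he : 0 < p.ramificationIdx' M := Nat.pos_of_ne_zero
    (IsDedekindDomain.ramificationIdx'_ne_zero (map_ne_bot_of_ne_bot hM) inferInstance hpM)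
  have hp : Prime p := prime_of_isPrime hM inferInstance
  ext x
  rcases eq_or_ne x 0 with rfl | hx
  · simp
  have hx' : span {x} ≠ ⊥ := by simpa using hx
  obtain ⟨m, hm⟩ : ∃ m : ℕ, emultiplicity p (span {x}) = m :=
    ⟨_, (FiniteMultiplicity.of_prime_left hp hx').emultiplicity_eq_multiplicity⟩
  rw [mem_comap, mem_pow_iff_le_emultiplicity, mem_pow_iff_le_emultiplicity,
    ← Set.image_singleton, ← map_span,
    IsDedekindDomain.emultiplicity_map_eq_ramificationIdx'_mul hx' hp.irreducible
      (prime_of_isPrime hM0 inferInstance).irreducible hM0, hm]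
  norm_cast
  rw [Nat.ceil_le, div_le_iff₀ (by exact_mod_cast he), mul_comm]
  norm_cast

end Ideal

theorem stmt_15_general {S : Type*} [CommRing S] [IsDedekindDomain S]
    (R : Subring S) [IsDedekindDomain ↥R] (I : Ideal S)
    (hI : I.comap R.subtype ≠ ⊥) (M : Ideal S) (hM : M.IsPrime) (hIM : I ≤ M) :
    ∀ l : ℕ, padicExp (M.comap R.subtype) ((M ^ l).comap R.subtype) =
      ⌈(l : ℚ) / (padicExp M (Ideal.map R.subtype (M.comap R.subtype)) : ℚ)⌉₊ := by
  intro l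
  have hM0 : M.under R ≠ ⊥ := fun h => hI (le_bot_iff.mp (h ▸ Ideal.comap_mono hIM))
  change padicExp (M.under R) ((M ^ l).comap (algebraMap R S)) =
    ⌈(l : ℚ) / (M.under R).ramificationIdx' M⌉₊
  rw [Ideal.comap_pow_eq_under_pow_ceil M hM0, padicExp_pow_self hM0 (hM.under R).ne_top]

/-- Let `S` and `R ⊆ S` be Dedekind domains, `I` an ideal of `S` with `I ∩ R ≠ 0`, `M` a
prime ideal of `S` containing `I`, and `e_M = v_M((M ∩ R)S)`. Then for every `l ∈ ℕ`,
`v_{M ∩ R}(M ^ l ∩ R) = ⌈l / e_M⌉`. -/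
theorem stmt_15 {S : Type*} [CommRing S] [IsDomain S] [IsDedekindDomain S]
    (R : Subring S) [IsDedekindDomain ↥R] (I : Ideal S)
    (hI : I.comap R.subtype ≠ ⊥) (M : Ideal S) (hM : M.IsPrime) (hIM : I ≤ M) :
    ∀ l : ℕ, padicExp (M.comap R.subtype) ((M ^ l).comap R.subtype) =
      ⌈(l : ℚ) / (padicExp M (Ideal.map R.subtype (M.comap R.subtype)) : ℚ)⌉₊ :=
  stmt_15_general R I hI M hM hIM
end

section
/- Let S be a Dedekind domain, R a subring of S that is a Dedekind domain, I and L ideals of S with I ∩ R ≠ {0} and I ⊆ L, and M a prime ideal of S containing I. For each prime ideal Q of S containing I, set e_Q = v_Q((Q ∩ R)S). Then v_{M∩R}(L ∩ R) = max{ ⌈v_Q(L) / e_Q⌉ | Q a prime ideal of S containing I with Q ∩ R = M ∩ R }. -/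
open UniqueFactorizationMonoid Ideal

section DedekindDomain

variable {D : Type*} [CommRing D] [IsDedekindDomain D] {P A B : Ideal D}

theorem le_pow_iff_le_count_normalizedFactors [DecidableEq (Ideal D)] [P.IsPrime] (hP0 : P ≠ ⊥)
    (hA : A ≠ ⊥) {l : ℕ} : A ≤ P ^ l ↔ l ≤ (normalizedFactors A).count P := by
  rw [← dvd_iff_le, pow_dvd_iff_le_emultiplicity,
    emultiplicity_eq_count_normalizedFactors (prime_of_isPrime hP0 ‹_›).irreducible hA,
    normalize_eq, Nat.cast_le]

theorem padicExp_eq_count [DecidableEq (Ideal D)] [P.IsPrime] (hP0 : P ≠ ⊥) (hA : A ≠ ⊥) :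
    padicExp P A = (normalizedFactors A).count P := by
  have : {l : ℕ | A ≤ P ^ l} = Set.Iic ((normalizedFactors A).count P) :=
    Set.ext fun _ => le_pow_iff_le_count_normalizedFactors hP0 hA
  rw [padicExp, this, csSup_Iic]

theorem le_pow_iff_le_padicExp [P.IsPrime] (hP0 : P ≠ ⊥) (hA : A ≠ ⊥) {l : ℕ} :
    A ≤ P ^ l ↔ l ≤ padicExp P A := by
  classical
  rw [padicExp_eq_count hP0 hA, le_pow_iff_le_count_normalizedFactors hP0 hA]

theorem padicExp_mul [P.IsPrime] (hP0 : P ≠ ⊥) (hA : A ≠ ⊥) (hB : B ≠ ⊥) :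
    padicExp P (A * B) = padicExp P A + padicExp P B := by
  classical
  rw [padicExp_eq_count hP0 (mul_ne_zero hA hB), normalizedFactors_mul hA hB,
    Multiset.count_add, padicExp_eq_count hP0 hA, padicExp_eq_count hP0 hB]

theorem padicExp_pow_self_s16 [P.IsPrime] (hP0 : P ≠ ⊥) (k : ℕ) : padicExp P (P ^ k) = k := by
  classical
  rw [padicExp_eq_count hP0 (pow_ne_zero k hP0), normalizedFactors_pow,
    normalizedFactors_irreducible (prime_of_isPrime hP0 ‹_›).irreducible, normalize_eq,
    Multiset.count_nsmul, Multiset.count_singleton_self, mul_one]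

theorem padicExp_self [P.IsPrime] (hP0 : P ≠ ⊥) : padicExp P P = 1 := by
  simpa using padicExp_pow_self_s16 hP0 1

theorem padicExp_eq_zero [P.IsPrime] (hP0 : P ≠ ⊥) (hA : A ≠ ⊥) (h : ¬ A ≤ P) :
    padicExp P A = 0 := by
  by_contra h0
  exact h (pow_one P ▸ (le_pow_iff_le_padicExp hP0 hA).2 (Nat.one_le_iff_ne_zero.2 h0))

theorem padicExp_top [P.IsPrime] (hP0 : P ≠ ⊥) : padicExp P ⊤ = 0 :=
  padicExp_eq_zero hP0 top_ne_bot fun h => IsPrime.ne_top ‹_› (top_le_iff.1 h)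

theorem padicExp_anti [P.IsPrime] (hP0 : P ≠ ⊥) (hA : A ≠ ⊥) (h : A ≤ B) :
    padicExp P B ≤ padicExp P A :=
  (le_pow_iff_le_padicExp hP0 hA).1 <|
    h.trans ((le_pow_iff_le_padicExp hP0 (ne_bot_of_le_ne_bot hA h)).2 le_rfl)

theorem le_of_forall_padicExp_le (hA : A ≠ ⊥) (hB : B ≠ ⊥)
    (h : ∀ Q : Ideal D, Q.IsPrime → Q ≠ ⊥ → padicExp Q B ≤ padicExp Q A) : A ≤ B := by
  classical
  rw [← dvd_iff_le, dvd_iff_normalizedFactors_le_normalizedFactors hB hA, Multiset.le_iff_count]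
  intro Q
  by_cases hQ : Q ∈ normalizedFactors B
  · have hQprime := prime_of_normalized_factor Q hQ
    have := isPrime_of_prime hQprime
    rw [← padicExp_eq_count hQprime.ne_zero hB, ← padicExp_eq_count hQprime.ne_zero hA]
    exact h Q this hQprime.ne_zero
  · rw [Multiset.count_eq_zero_of_notMem hQ]
    exact Nat.zero_le _

theorem not_le_of_ne_of_isPrime {p q : Ideal D} [hp : p.IsPrime] [q.IsPrime] (hp0 : p ≠ ⊥)
    (hne : p ≠ q) : ¬ p ≤ q :=
  fun h => hne ((hp.isMaximal hp0).eq_of_le IsPrime.ne_top' h)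

end DedekindDomain

theorem Nat.ceil_natCast_div_le_iff {K : Type*} [Field K] [LinearOrder K]
    [IsStrictOrderedRing K] [FloorSemiring K] {a e k : ℕ} (he : 0 < e) :
    ⌈(a : K) / e⌉₊ ≤ k ↔ a ≤ e * k := by
  rw [Nat.ceil_le, div_le_iff₀ (by exact_mod_cast he), ← Nat.cast_mul, Nat.cast_le, mul_comm]

section Subring

variable {S : Type*} [CommRing S] (R : Subring S)

theorem map_subtype_ne_bot {A : Ideal R} (hA : A ≠ ⊥) : A.map R.subtype ≠ ⊥ :=
  (map_eq_bot_iff_of_injective Subtype.val_injective).not.2 hA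

theorem ne_bot_of_comap_subtype_ne_bot {Q : Ideal S} (hQ0 : Q.comap R.subtype ≠ ⊥) :
    Q ≠ ⊥ := by
  rintro rfl
  exact hQ0 (comap_bot_of_injective _ Subtype.val_injective)

variable {R} [IsDedekindDomain S]

theorem one_le_padicExp_map_comap {Q : Ideal S} [Q.IsPrime] (hQ0 : Q.comap R.subtype ≠ ⊥) :
    1 ≤ padicExp Q ((Q.comap R.subtype).map R.subtype) :=
  (le_pow_iff_le_padicExp (ne_bot_of_comap_subtype_ne_bot R hQ0) (map_subtype_ne_bot R hQ0)).1
    (by rw [pow_one]; exact map_comap_le)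

variable [IsDedekindDomain R]

theorem padicExp_map_subtype {Q : Ideal S} [Q.IsPrime] (hQ0 : Q.comap R.subtype ≠ ⊥)
    {A : Ideal R} (hA : A ≠ ⊥) :
    padicExp Q (A.map R.subtype) =
      padicExp Q ((Q.comap R.subtype).map R.subtype) * padicExp (Q.comap R.subtype) A := by
  have hQ0' := ne_bot_of_comap_subtype_ne_bot R hQ0
  induction A using induction_on_prime with
  | h₁ => exact absurd rfl hA
  | h₂ A hAu =>
    rw [isUnit_iff.mp hAu, Ideal.map_top, padicExp_top hQ0', padicExp_top hQ0, mul_zero]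
  | h₃ A p hA0 hp ih =>
    have hp0 : p ≠ ⊥ := hp.ne_zero
    have := isPrime_of_prime hp
    rw [Ideal.map_mul, padicExp_mul hQ0' (map_subtype_ne_bot R hp0) (map_subtype_ne_bot R hA0),
      padicExp_mul hQ0 hp0 hA0, ih hA0, mul_add]
    congr 1
    obtain rfl | hne := eq_or_ne p (Q.comap R.subtype)
    · rw [padicExp_self hQ0, mul_one]
    · have hnle := not_le_of_ne_of_isPrime hp0 hne
      rw [padicExp_eq_zero hQ0 hp0 hnle, mul_zero, padicExp_eq_zero hQ0' (map_subtype_ne_bot R hp0)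
        fun h => hnle (map_le_iff_le_comap.1 h)]

theorem padicExp_le_mul_padicExp_comap {Q L : Ideal S} [Q.IsPrime]
    (hQ0 : Q.comap R.subtype ≠ ⊥) (hL : L.comap R.subtype ≠ ⊥) :
    padicExp Q L ≤
      padicExp Q ((Q.comap R.subtype).map R.subtype) *
        padicExp (Q.comap R.subtype) (L.comap R.subtype) := by
  rw [← padicExp_map_subtype hQ0 hL]
  exact padicExp_anti (ne_bot_of_comap_subtype_ne_bot R hQ0) (map_subtype_ne_bot R hL) map_comap_le

theorem map_pow_mul_le_of_comap_eq {P J : Ideal R} [P.IsPrime] (hP0 : P ≠ ⊥)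
    (hJP : padicExp P J = 0) {L : Ideal S} (hL : L.comap R.subtype ≠ ⊥) {m : ℕ}
    (hJ : L.comap R.subtype = P ^ m * J)
    {k : ℕ} (hk : ∀ Q : Ideal S, Q.IsPrime → L ≤ Q → Q.comap R.subtype = P →
      padicExp Q L ≤ padicExp Q ((Q.comap R.subtype).map R.subtype) * k) :
    (P ^ k * J).map R.subtype ≤ L := by
  have hJ0 : J ≠ ⊥ := right_ne_zero_of_mul (hJ ▸ hL)
  refine le_of_forall_padicExp_le (map_subtype_ne_bot R (mul_ne_zero (pow_ne_zero k hP0) hJ0))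
    (ne_bot_of_comap_subtype_ne_bot R hL) fun Q hQ hQ0 => ?_
  by_cases hLQ : L ≤ Q
  swap
  · rw [padicExp_eq_zero hQ0 (ne_bot_of_comap_subtype_ne_bot R hL) hLQ]
    exact Nat.zero_le _
  have hQR0 : Q.comap R.subtype ≠ ⊥ := ne_bot_of_le_ne_bot hL (comap_mono hLQ)
  rw [padicExp_map_subtype hQR0 (mul_ne_zero (pow_ne_zero k hP0) hJ0),
    padicExp_mul hQR0 (pow_ne_zero k hP0) hJ0]
  obtain rfl | hne := eq_or_ne (Q.comap R.subtype) P
  · rw [padicExp_pow_self_s16 hP0, hJP, add_zero]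
    exact hk Q hQ hLQ rfl
  · have hPQ := not_le_of_ne_of_isPrime hP0 hne.symm
    have hpow : ∀ n, padicExp (Q.comap R.subtype) (P ^ n) = 0 := fun n =>
      padicExp_eq_zero hQR0 (pow_ne_zero n hP0) fun h => hPQ (IsPrime.le_of_pow_le h)
    calc padicExp Q L
        ≤ padicExp Q ((Q.comap R.subtype).map R.subtype) *
            padicExp (Q.comap R.subtype) (L.comap R.subtype) :=
          padicExp_le_mul_padicExp_comap hQR0 hL
      _ = _ := by rw [hJ, padicExp_mul hQR0 (pow_ne_zero m hP0) hJ0, hpow, hpow]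

theorem padicExp_comap_subtype_le {P : Ideal R} [P.IsPrime] (hP0 : P ≠ ⊥) {L : Ideal S}
    (hL : L.comap R.subtype ≠ ⊥) {k : ℕ}
    (hk : ∀ Q : Ideal S, Q.IsPrime → L ≤ Q → Q.comap R.subtype = P →
      padicExp Q L ≤ padicExp Q ((Q.comap R.subtype).map R.subtype) * k) :
    padicExp P (L.comap R.subtype) ≤ k := by
  set m := padicExp P (L.comap R.subtype)
  obtain ⟨J, hJ⟩ : P ^ m ∣ L.comap R.subtype :=
    dvd_iff_le.2 ((le_pow_iff_le_padicExp hP0 hL).2 le_rfl)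
  have hJ0 : J ≠ ⊥ := right_ne_zero_of_mul (hJ ▸ hL)
  have hJP : padicExp P J = 0 := by
    have := padicExp_mul hP0 (pow_ne_zero m hP0) hJ0
    rw [← hJ, padicExp_pow_self_s16 hP0] at this
    omega
  have hA0 : P ^ k * J ≠ ⊥ := mul_ne_zero (pow_ne_zero k hP0) hJ0
  calc m ≤ padicExp P (P ^ k * J) :=
        padicExp_anti hP0 hA0 (map_le_iff_le_comap.1 (map_pow_mul_le_of_comap_eq hP0 hJP hL hJ hk))
    _ = k := by rw [padicExp_mul hP0 (pow_ne_zero k hP0) hJ0, padicExp_pow_self_s16 hP0, hJP, add_zero]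

end Subring

theorem stmt_16_general {S : Type*} [CommRing S] [IsDedekindDomain S]
    (R : Subring S) [IsDedekindDomain ↥R] (I L : Ideal S)
    (hI : I.comap R.subtype ≠ ⊥) (hIL : I ≤ L)
    (M : Ideal S) (hM : M.IsPrime) (hIM : I ≤ M) :
    IsGreatest
      {n : ℕ | ∃ Q : Ideal S, Q.IsPrime ∧ I ≤ Q ∧ Q.comap R.subtype = M.comap R.subtype ∧
        n = ⌈(padicExp Q L : ℚ) /
              (padicExp Q (Ideal.map R.subtype (Q.comap R.subtype)) : ℚ)⌉₊}
      (padicExp (M.comap R.subtype) (L.comap R.subtype)) := by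
  have hP0 : M.comap R.subtype ≠ ⊥ := ne_bot_of_le_ne_bot hI (comap_mono hIM)
  have hL0 : L.comap R.subtype ≠ ⊥ := ne_bot_of_le_ne_bot hI (comap_mono hIL)
  have bound : ∀ Q : Ideal S, Q.IsPrime → Q.comap R.subtype = M.comap R.subtype →
      ⌈(padicExp Q L : ℚ) / (padicExp Q ((Q.comap R.subtype).map R.subtype) : ℚ)⌉₊ ≤
        padicExp (M.comap R.subtype) (L.comap R.subtype) := by
    intro Q hQ hQM
    rw [← hQM] at hP0 ⊢
    exact (Nat.ceil_natCast_div_le_iff (one_le_padicExp_map_comap hP0)).2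
      (padicExp_le_mul_padicExp_comap hP0 hL0)
  refine ⟨?_, fun n ⟨Q, hQ, _, hQM, hn⟩ => hn ▸ bound Q hQ hQM⟩
  by_contra hmax
  have hm0 : padicExp (M.comap R.subtype) (L.comap R.subtype) ≠ 0 := by
    intro h0
    refine hmax ⟨M, hM, hIM, rfl, ?_⟩
    have := bound M hM rfl
    omega
  have hle := padicExp_comap_subtype_le hP0 hL0 fun Q hQ hLQ hQM => by
    rw [← Nat.ceil_natCast_div_le_iff (K := ℚ) (one_le_padicExp_map_comap (hQM ▸ hP0))]
    exact Nat.le_sub_one_of_lt <| (bound Q hQ hQM).lt_of_ne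
      fun h => hmax ⟨Q, hQ, hIL.trans hLQ, hQM, h.symm⟩
  omega

/-- Let `S` and `R ⊆ S` be Dedekind domains, `I ⊆ L` ideals of `S` with `I ∩ R ≠ 0`, and
`M` a prime ideal of `S` containing `I`. With `e_Q = v_Q((Q ∩ R)S)` we have
`v_{M ∩ R}(L ∩ R) = max { ⌈v_Q(L) / e_Q⌉ | Q ∈ V(I), Q ∩ R = M ∩ R }`. -/
theorem stmt_16 {S : Type*} [CommRing S] [IsDomain S] [IsDedekindDomain S]
    (R : Subring S) [IsDedekindDomain ↥R] (I L : Ideal S)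
    (hI : I.comap R.subtype ≠ ⊥) (hIL : I ≤ L)
    (M : Ideal S) (hM : M.IsPrime) (hIM : I ≤ M) :
    IsGreatest
      {n : ℕ | ∃ Q : Ideal S, Q.IsPrime ∧ I ≤ Q ∧ Q.comap R.subtype = M.comap R.subtype ∧
        n = ⌈(padicExp Q L : ℚ) /
              (padicExp Q (Ideal.map R.subtype (Q.comap R.subtype)) : ℚ)⌉₊}
      (padicExp (M.comap R.subtype) (L.comap R.subtype)) :=
  stmt_16_general R I L hI hIL M hM hIM
end

section
/- Let S be a Dedekind domain, R a subring of S that is Noetherian and one-dimensional, and I a radical ideal of S with I ∩ R ≠ {0}. For each prime ideal Q of S containing I, set f_Q = dim_{R/(Q∩R)}(S/Q). Then I is an R-conductor ideal of S if and only if for every prime ideal M of S containing I, either f_M ≥ 2 or (I :_R M) ⊆ I. -/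
/-!
Since `R` is one-dimensional and `M ∩ R ⊇ I ∩ R ≠ 0`, the residue ring `R/(M ∩ R)` is a field,
so `f_M = 1` exactly when `R + M = S`. If `I = (V :_S S)` with `R ⊆ V` and `R + M = S`, then any
`x ∈ (I :_R M)` satisfies `xS ⊆ xR + xM ⊆ V + I ⊆ V`, so `x ∈ I`.

Conversely take `V = R + I` with conductor `J ⊇ I`; it suffices that `J ⊆ M` for every prime
`M ⊇ I`. Write `I = MK`; as `I` is radical, `M² ∤ I`, so `K ⊄ M` and hence `JK ⊄ M`. Subtracting
an element of `I` from some `y ∈ JK \ M` gives `r ∈ R ∩ J ∩ K` with `r ∉ M`. Then `rM ⊆ MK = I`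
but `r ∉ I`, while `rS ⊆ R + M` with `r` invertible modulo `M` forces `R + M = S`.
-/

open Function

theorem RingHom.rank_le_one_iff_surjective {K L : Type*} [DivisionRing K] [Ring L]
    (f : K →+* L) : @Module.rank K L _ _ f.toModule ≤ 1 ↔ Surjective f := by
  let _ := f.toModule
  have smul_def (a : K) (v : L) : a • v = f a * v := rfl
  rw [rank_le_one_iff]
  constructor
  · rintro ⟨v₀, hv₀⟩ v
    obtain ⟨a, ha⟩ := hv₀ 1
    obtain ⟨b, rfl⟩ := hv₀ v
    rw [smul_def] at ha
    rcases eq_or_ne a 0 with rfl | ha0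
    · exact ⟨0, (subsingleton_of_zero_eq_one (by simpa using ha)).elim _ _⟩
    refine ⟨b * a⁻¹, ?_⟩
    rw [smul_def, map_mul]
    congr 1
    calc f a⁻¹ = f a⁻¹ * (f a * v₀) := by rw [ha, mul_one]
      _ = v₀ := by rw [← mul_assoc, ← map_mul, inv_mul_cancel₀ ha0, map_one, one_mul]
  · intro hf
    exact ⟨1, fun v => (hf v).imp fun a ha => by rw [smul_def, mul_one, ha]⟩

section AddIdeal

variable {S : Type*} [CommRing S] {R : Subring S} {I M : Ideal S}

/-- `R + I`, realised as the preimage in `S` of the image of `R` in `S ⧸ I`. -/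
def Subring.addIdeal (R : Subring S) (I : Ideal S) : Subring S :=
  (R.map (Ideal.Quotient.mk I)).comap (Ideal.Quotient.mk I)

theorem Subring.mem_addIdeal {x : S} : x ∈ R.addIdeal I ↔ ∃ r ∈ R, r - x ∈ I := by
  simp only [Subring.addIdeal, Subring.mem_comap, Subring.mem_map, Ideal.Quotient.eq]

theorem Subring.le_addIdeal : R ≤ R.addIdeal I :=
  fun r hr => Subring.mem_addIdeal.mpr ⟨r, hr, by simp⟩

theorem Subring.addIdeal_mono (h : I ≤ M) : R.addIdeal I ≤ R.addIdeal M :=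
  fun _ hx => Subring.mem_addIdeal.mpr <|
    (Subring.mem_addIdeal.mp hx).imp fun _ ⟨hr, hrx⟩ => ⟨hr, h hrx⟩

theorem Ideal.surjective_quotientMap_subtype_iff :
    Surjective (Ideal.quotientMap M R.subtype le_rfl) ↔ R.addIdeal M = ⊤ := by
  rw [eq_top_iff]
  constructor
  · intro hf s _
    obtain ⟨r, hr⟩ := hf (Ideal.Quotient.mk M s)
    obtain ⟨r, rfl⟩ := Ideal.Quotient.mk_surjective r
    exact Subring.mem_addIdeal.mpr ⟨r, r.2, Ideal.Quotient.eq.mp ((Ideal.quotientMap_mk ..).symm.trans hr)⟩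
  · intro h x
    obtain ⟨s, rfl⟩ := Ideal.Quotient.mk_surjective x
    obtain ⟨r, hr, hrs⟩ := Subring.mem_addIdeal.mp (h (Subring.mem_top s))
    exact ⟨Ideal.Quotient.mk _ ⟨r, hr⟩, Ideal.Quotient.eq.mpr hrs⟩

theorem le_condIdeal_addIdeal : I ≤ condIdeal (R.addIdeal I).toAddSubgroup :=
  fun x hx s => Subring.mem_addIdeal.mpr ⟨0, R.zero_mem, by simpa using I.mul_mem_right s hx⟩

theorem Subring.addIdeal_eq_top_of_mem_condIdeal (hM : M.IsMaximal) {x : S} (hxM : x ∉ M)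
    (hx : x ∈ condIdeal (R.addIdeal M).toAddSubgroup) : R.addIdeal M = ⊤ := by
  obtain ⟨y, m, hm, hyx⟩ := hM.exists_inv hxM
  refine eq_top_iff.mpr fun s _ => ?_
  obtain ⟨r, hr, hrs⟩ := Subring.mem_addIdeal.mp (hx (y * s))
  refine Subring.mem_addIdeal.mpr ⟨r, hr, ?_⟩
  rw [show r - s = (r - x * (y * s)) - m * s by linear_combination s * hyx]
  exact M.sub_mem hrs (M.mul_mem_right s hm)

theorem colon_subset_of_isConductorIdeal (hI : IsConductorIdeal R I) (hRM : R.addIdeal M = ⊤) :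
    {x : S | x ∈ R ∧ ∀ m ∈ M, x * m ∈ I} ⊆ I := by
  obtain ⟨V, hRV, rfl⟩ := hI
  rintro x ⟨hxR, hxM⟩ s
  obtain ⟨r, hr, hrs⟩ := Subring.mem_addIdeal.mp (hRM ▸ Subring.mem_top s)
  rw [show x * s = x * r - x * (r - s) by ring]
  exact V.sub_mem (hRV (R.mul_mem hxR hr)) (by simpa using hxM _ hrs 1)

end AddIdeal

theorem Ideal.IsRadical.squarefree {S : Type*} [CommRing S] [IsDedekindDomain S] {I : Ideal S}
    (hI : I.IsRadical) (hI0 : I ≠ ⊥) : Squarefree I := by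
  refine _root_.IsRadical.squarefree hI0 fun n J hJ => ?_
  rw [Ideal.dvd_iff_le] at hJ ⊢
  rcases eq_or_ne n 0 with rfl | hn
  · rw [pow_zero, Ideal.one_eq_top, top_le_iff] at hJ
    exact hJ ▸ le_top
  · calc J ≤ J.radical := Ideal.le_radical
      _ = (J ^ n).radical := (Ideal.radical_pow _ hn).symm
      _ ≤ I := hI.radical_le_iff.mpr hJ

theorem Ideal.exists_eq_mul_not_le_of_isRadical {S : Type*} [CommRing S] [IsDedekindDomain S]
    {I M : Ideal S} (hI : I.IsRadical) (hI0 : I ≠ ⊥) (hM : M ≠ ⊤) (hIM : I ≤ M) :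
    ∃ K : Ideal S, I = M * K ∧ ¬ K ≤ M := by
  obtain ⟨K, rfl⟩ := Ideal.dvd_iff_le.mpr hIM
  refine ⟨K, rfl, fun hKM => hM ?_⟩
  obtain ⟨L, rfl⟩ := Ideal.dvd_iff_le.mpr hKM
  have hsq : Squarefree (M * (M * L)) := hI.squarefree hI0
  exact Ideal.isUnit_iff.mp (hsq M ⟨L, (mul_assoc _ _ _).symm⟩)

section Dedekind

variable {S : Type*} [CommRing S] [IsDedekindDomain S] {R : Subring S} {I : Ideal S}
  (hI : I.IsRadical) (hI0 : I ≠ ⊥)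
include hI hI0

theorem condIdeal_addIdeal_le {M : Ideal S} (hM : M.IsPrime) (hIM : I ≤ M)
    (h : R.addIdeal M = ⊤ → {x : S | x ∈ R ∧ ∀ m ∈ M, x * m ∈ I} ⊆ I) :
    condIdeal (R.addIdeal I).toAddSubgroup ≤ M := by
  set J := condIdeal (R.addIdeal I).toAddSubgroup
  intro x hxJ
  by_contra hxM
  obtain ⟨K, rfl, hKM⟩ := Ideal.exists_eq_mul_not_le_of_isRadical hI hI0 hM.ne_top hIM
  have hJK : ¬ J * K ≤ M := fun hle => (hM.mul_le.mp hle).elim (fun h => hxM (h hxJ)) hKM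
  obtain ⟨y, hyJK, hyM⟩ := SetLike.not_le_iff_exists.mp hJK
  have hyJ : y ∈ J := Ideal.mul_le_left hyJK
  obtain ⟨r, hr, hry⟩ := Subring.mem_addIdeal.mp (hyJ 1)
  rw [mul_one] at hry
  have hrJ : r ∈ J := by simpa using J.add_mem hyJ (le_condIdeal_addIdeal hry)
  have hrK : r ∈ K := by simpa using K.add_mem (Ideal.mul_le_right hyJK) (Ideal.mul_le_right hry)
  have hrM : r ∉ M := fun hrM => hyM (by simpa using M.sub_mem hrM (hIM hry))
  have hRM : R.addIdeal M = ⊤ :=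
    Subring.addIdeal_eq_top_of_mem_condIdeal (hM.isMaximal (ne_bot_of_le_ne_bot hI0 hIM)) hrM
      fun s => Subring.addIdeal_mono hIM (hrJ s)
  exact hrM (hIM (h hRM ⟨hr, fun m hm => mul_comm m r ▸ Ideal.mul_mem_mul hm hrK⟩))

theorem isConductorIdeal_of_forall_colon_subset
    (h : ∀ M : Ideal S, M.IsPrime → I ≤ M → R.addIdeal M = ⊤ →
      {x : S | x ∈ R ∧ ∀ m ∈ M, x * m ∈ I} ⊆ I) :
    IsConductorIdeal R I := by
  refine ⟨R.addIdeal I, Subring.le_addIdeal, le_antisymm le_condIdeal_addIdeal ?_⟩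
  calc _ ≤ sInf {M : Ideal S | I ≤ M ∧ M.IsPrime} :=
        le_sInf fun M ⟨hIM, hM⟩ => condIdeal_addIdeal_le hI hI0 hM hIM (h M hM hIM)
    _ = I.radical := (Ideal.radical_eq_sInf I).symm
    _ ≤ I := hI

end Dedekind

theorem stmt_19_general {S : Type*} [CommRing S] [IsDedekindDomain S]
    (R : Subring S) (hdim : ringKrullDim ↥R = 1)
    (I : Ideal S) (hrad : I.radical = I) (hI : I.comap R.subtype ≠ ⊥) :
    IsConductorIdeal R I ↔
      ∀ M : Ideal S, M.IsPrime → I ≤ M →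
        (2 ≤ @Module.rank (↥R ⧸ M.comap R.subtype) (S ⧸ M) _ _
            (Ideal.quotientMap M R.subtype le_rfl).toModule ∨
        {x : S | x ∈ R ∧ ∀ m ∈ M, x * m ∈ I} ⊆ (I : Set S)) := by
  have : Ring.KrullDimLE 1 R := Ring.krullDimLE_iff.mpr hdim.le
  have two_le_rank_iff (M : Ideal S) (hM : M.IsPrime) (hIM : I ≤ M) :
      2 ≤ @Module.rank (↥R ⧸ M.comap R.subtype) (S ⧸ M) _ _
          (Ideal.quotientMap M R.subtype le_rfl).toModule ↔ R.addIdeal M ≠ ⊤ := by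
    have : (M.comap R.subtype).IsMaximal :=
      (hM.comap _).isMaximal_of_ne_bot (ne_bot_of_le_ne_bot hI (Ideal.comap_mono hIM))
    let _ := Ideal.Quotient.field (M.comap R.subtype)
    rw [Ne, ← Ideal.surjective_quotientMap_subtype_iff, ← RingHom.rank_le_one_iff_surjective, not_le]
    exact Cardinal.two_le_iff_one_lt
  have hI0 : I ≠ ⊥ := fun h => hI (h ▸ Ideal.comap_bot_of_injective _ R.subtype_injective)
  constructor
  · intro hcond M hM hIM
    rw [two_le_rank_iff M hM hIM, or_iff_not_imp_left, not_not]
    exact colon_subset_of_isConductorIdeal hcond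
  · intro h
    refine isConductorIdeal_of_forall_colon_subset hrad.le hI0 fun M hM hIM hRM => ?_
    exact (h M hM hIM).resolve_left ((two_le_rank_iff M hM hIM).not.mpr (not_not.mpr hRM))

/-- Let `S` be a Dedekind domain, `R ⊆ S` a Noetherian one-dimensional subring, and `I` a
radical ideal of `S` with `I ∩ R ≠ 0`. With `f_Q = dim_{R/(Q ∩ R)}(S/Q)`, the ideal `I`
is an `R`-conductor ideal of `S` iff for every prime ideal `M` of `S` containing `I` we
have `f_M ≥ 2` or `(I :_R M) ⊆ I`. -/
theorem stmt_19 {S : Type*} [CommRing S] [IsDomain S] [IsDedekindDomain S]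
    (R : Subring S) [IsNoetherianRing ↥R] (hdim : ringKrullDim ↥R = 1)
    (I : Ideal S) (hrad : I.radical = I) (hI : I.comap R.subtype ≠ ⊥) :
    IsConductorIdeal R I ↔
      ∀ M : Ideal S, M.IsPrime → I ≤ M →
        (2 ≤ @Module.rank (↥R ⧸ M.comap R.subtype) (S ⧸ M) _ _
            (Ideal.quotientMap M R.subtype le_rfl).toModule ∨
        {x : S | x ∈ R ∧ ∀ m ∈ M, x * m ∈ I} ⊆ (I : Set S)) :=
  stmt_19_general R hdim I hrad hI
end
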